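/- arXiv:2111.12676 — 3 statements merged into one kernel-verified Lean document; each statement's English description precedes it below -/
import Mathlib

section
/- Let q(N) be the number of partitions of N into distinct positive parts (equivalently the number of finite subsets of ℕ with element sum N). Then q(N) ≤ (π/(2√(3N)))·exp(π√(N/3)) for all positive integers N. -/
/-!
With `q M = #(distinctPartitions M)` and `x = exp (-t)`, the generating function gives
`∑_{M ≤ K} q M x^M ≤ ∏_{n=1}^K (1 + x^n)`. Adding `d` to the largest part shows that `q` is
monotone on positive integers, so `q N x^N / (1 - x) ≤ ∏_{n ≥ 1} (1 + x^n)`. The product is at most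
`exp (π² / (12 t))`: expanding `log (1 + r) = ∑_k (r^k - r^{2k}) / k` (nonnegative terms) and
summing over `n` first, the `k`-th term is a geometric sum `≤ 1 / (2 k sinh (t k)) ≤ 1 / (2 t k²)`,
and `∑ 1 / k² = π² / 6`. Hence `q N ≤ (1 - x) exp (t N + π² / (12 t)) ≤ t exp (t N + π² / (12 t))`,
and `t = π / (2 √(3 N))` makes the exponent `π √(N / 3)`.
-/

open Finset Real

def distinctPartitions (N : ℕ) : Finset (Finset ℕ) :=
  (range (N + 1)).powerset.filter (fun L => 0 ∉ L ∧ ∑ ℓ ∈ L, ℓ = N)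

theorem mem_distinctPartitions {N : ℕ} {L : Finset ℕ} :
    L ∈ distinctPartitions N ↔ 0 ∉ L ∧ ∑ ℓ ∈ L, ℓ = N := by
  refine ⟨fun h => (mem_filter.mp h).2,
    fun ⟨h0, hsum⟩ => mem_filter.mpr ⟨mem_powerset.mpr fun ℓ hℓ => ?_, h0, hsum⟩⟩
  have : ℓ ≤ ∑ ℓ ∈ L, ℓ := single_le_sum (f := id) (fun _ _ => Nat.zero_le _) hℓ
  exact mem_range.mpr (by omega)

theorem nonempty_of_mem_distinctPartitions {N : ℕ} (hN : N ≠ 0) {L : Finset ℕ}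
    (hL : L ∈ distinctPartitions N) : L.Nonempty := by
  rw [nonempty_iff_ne_empty]
  rintro rfl
  exact hN (mem_distinctPartitions.mp hL).2.symm

theorem filter_powerset_Icc_sum_eq {K M : ℕ} (hM : M ≤ K) :
    (Icc 1 K).powerset.filter (fun S => ∑ ℓ ∈ S, ℓ = M) = distinctPartitions M := by
  ext S
  simp only [mem_filter, mem_powerset, mem_distinctPartitions]
  constructor
  · rintro ⟨hS, hsum⟩
    exact ⟨fun h0 => by simpa using hS h0, hsum⟩
  · rintro ⟨h0, hsum⟩
    refine ⟨fun ℓ hℓ => ?_, hsum⟩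
    have : ℓ ≤ ∑ ℓ ∈ S, ℓ := single_le_sum (f := id) (fun _ _ => Nat.zero_le _) hℓ
    have : ℓ ≠ 0 := fun h => h0 (h ▸ hℓ)
    exact mem_Icc.mpr (by omega)

theorem sum_card_distinctPartitions_mul_pow_le {x : ℝ} (hx : 0 ≤ x) (K : ℕ) :
    ∑ M ∈ range (K + 1), (#(distinctPartitions M) : ℝ) * x ^ M ≤ ∏ n ∈ Icc 1 K, (1 + x ^ n) := by
  calc ∑ M ∈ range (K + 1), (#(distinctPartitions M) : ℝ) * x ^ M
      = ∑ M ∈ range (K + 1), ∑ S ∈ (Icc 1 K).powerset with ∑ ℓ ∈ S, ℓ = M, x ^ M := by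
        refine sum_congr rfl fun M hM => ?_
        rw [filter_powerset_Icc_sum_eq (Nat.lt_succ_iff.mp (mem_range.mp hM)), sum_const,
          nsmul_eq_mul]
    _ = ∑ S ∈ (Icc 1 K).powerset with ∑ ℓ ∈ S, ℓ ∈ range (K + 1), x ^ ∑ ℓ ∈ S, ℓ :=
        sum_fiberwise_eq_sum_filter' _ _ _ _
    _ ≤ ∑ S ∈ (Icc 1 K).powerset, x ^ ∑ ℓ ∈ S, ℓ :=
        sum_le_sum_of_subset_of_nonneg (filter_subset _ _) fun _ _ _ => by positivity
    _ = ∏ n ∈ Icc 1 K, (1 + x ^ n) := by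
        rw [prod_one_add]
        exact sum_congr rfl fun S _ => (prod_pow_eq_pow_sum S id x).symm

def raiseMax (d : ℕ) (L : Finset ℕ) : Finset ℕ :=
  insert (L.sup id + d) (L.erase (L.sup id))

theorem lt_sup_id_of_mem_erase {L : Finset ℕ} {ℓ : ℕ} (hℓ : ℓ ∈ L.erase (L.sup id)) :
    ℓ < L.sup id :=
  lt_of_le_of_ne (le_sup (f := id) (mem_of_mem_erase hℓ)) (ne_of_mem_erase hℓ)

theorem sup_raiseMax (d : ℕ) (L : Finset ℕ) : (raiseMax d L).sup id = L.sup id + d := by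
  rw [raiseMax, sup_insert]
  exact sup_eq_left.mpr (Finset.sup_le fun ℓ hℓ => (lt_sup_id_of_mem_erase hℓ).le.trans (by simp))

theorem sup_id_add_notMem_erase (d : ℕ) (L : Finset ℕ) : L.sup id + d ∉ L.erase (L.sup id) :=
  fun h => by have := lt_sup_id_of_mem_erase h; omega

theorem erase_raiseMax (d : ℕ) (L : Finset ℕ) :
    (raiseMax d L).erase (L.sup id + d) = L.erase (L.sup id) :=
  erase_insert (sup_id_add_notMem_erase d L)

theorem sup_id_mem {L : Finset ℕ} (hL : L.Nonempty) : L.sup id ∈ L := by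
  obtain ⟨m, hm, hsup⟩ := exists_mem_eq_sup L hL id
  exact hsup ▸ hm

theorem sum_raiseMax (d : ℕ) {L : Finset ℕ} (hL : L.Nonempty) :
    ∑ ℓ ∈ raiseMax d L, ℓ = ∑ ℓ ∈ L, ℓ + d := by
  rw [raiseMax, sum_insert (sup_id_add_notMem_erase d L), ← sum_erase_add _ _ (sup_id_mem hL)]
  omega

theorem zero_notMem_raiseMax (d : ℕ) {L : Finset ℕ} (hL : L.Nonempty) (h0 : 0 ∉ L) :
    0 ∉ raiseMax d L := by
  have hm : L.sup id ≠ 0 := fun h => h0 (h ▸ sup_id_mem hL)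
  simp only [raiseMax, mem_insert, mem_erase, not_or]
  exact ⟨by omega, fun h => h0 h.2⟩

theorem raiseMax_injOn (d : ℕ) : Set.InjOn (raiseMax d) {L | L.Nonempty} := by
  intro L₁ h₁ L₂ h₂ heq
  have hsup : L₁.sup id = L₂.sup id := by
    have := congrArg (·.sup id) heq
    simp only [sup_raiseMax] at this
    omega
  have herase : L₁.erase (L₁.sup id) = L₂.erase (L₂.sup id) := by
    rw [← erase_raiseMax d L₁, ← erase_raiseMax d L₂, heq, hsup]
  rw [← insert_erase (sup_id_mem h₁), ← insert_erase (sup_id_mem h₂), herase, hsup]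

theorem card_distinctPartitions_le_add {N : ℕ} (hN : N ≠ 0) (d : ℕ) :
    #(distinctPartitions N) ≤ #(distinctPartitions (N + d)) := by
  have hne := fun L (hL : L ∈ distinctPartitions N) => nonempty_of_mem_distinctPartitions hN hL
  refine card_le_card_of_injOn (raiseMax d) (fun L hL => ?_)
    ((raiseMax_injOn d).mono fun L hL => hne L hL)
  obtain ⟨h0, hsum⟩ := mem_distinctPartitions.mp hL
  exact mem_distinctPartitions.mpr
    ⟨zero_notMem_raiseMax d (hne L hL) h0, by rw [sum_raiseMax d (hne L hL), hsum]⟩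

theorem hasSum_pow_sub_sq_pow_div_log_one_add {r : ℝ} (h0 : 0 ≤ r) (h1 : r < 1) :
    HasSum (fun k : ℕ => (r ^ (k + 1) - (r ^ 2) ^ (k + 1)) / (k + 1)) (log (1 + r)) := by
  have hr2 : r ^ 2 < 1 := pow_lt_one₀ h0 h1 two_ne_zero
  have := (hasSum_pow_div_log_of_abs_lt_one (abs_lt.mpr ⟨by linarith, h1⟩)).sub
    (hasSum_pow_div_log_of_abs_lt_one (abs_lt.mpr ⟨by nlinarith, hr2⟩))
  rw [show log (1 + r) = -log (1 - r) - -log (1 - r ^ 2) by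
    rw [show 1 - r ^ 2 = (1 - r) * (1 + r) by ring, log_mul (by linarith) (by linarith)]
    ring]
  simpa only [sub_div] using this

theorem sum_pow_sub_sq_pow_le {ρ : ℝ} (h0 : 0 ≤ ρ) (h1 : ρ < 1) (s : Finset ℕ) :
    ∑ n ∈ s, (ρ ^ n - (ρ ^ 2) ^ n) ≤ ρ / (1 - ρ ^ 2) := by
  have hρ2 : ρ ^ 2 < 1 := pow_lt_one₀ h0 h1 two_ne_zero
  have hsum := (hasSum_geometric_of_lt_one h0 h1).sub
    (hasSum_geometric_of_lt_one (sq_nonneg ρ) hρ2)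
  have hval : (1 - ρ)⁻¹ - (1 - ρ ^ 2)⁻¹ = ρ / (1 - ρ ^ 2) := by
    have : 1 - ρ ≠ 0 := by linarith
    have : 1 - ρ ^ 2 ≠ 0 := by linarith
    field_simp
    ring
  refine hval ▸ sum_le_hasSum s (fun n _ => ?_) hsum
  rw [← pow_mul, sub_nonneg]
  exact pow_le_pow_of_le_one h0 h1.le (by omega)

theorem exp_neg_div_one_sub_exp_neg_sq_le {a : ℝ} (ha : 0 < a) :
    exp (-a) / (1 - exp (-a) ^ 2) ≤ 1 / (2 * a) := by
  have hsinh : exp (-a) / (1 - exp (-a) ^ 2) = 1 / (2 * sinh a) := by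
    have : exp a - exp (-a) ≠ 0 := by
      rw [sub_ne_zero, Ne, exp_eq_exp]
      linarith
    rw [sinh_eq, exp_neg]
    field_simp
  rw [hsinh]
  gcongr
  exact (self_lt_sinh_iff.mpr ha).le

theorem hasSum_one_div_mul_add_one_sq {t : ℝ} (ht : 0 < t) :
    HasSum (fun k : ℕ => 1 / (2 * t * ((k : ℝ) + 1) ^ 2)) (π ^ 2 / (12 * t)) := by
  have basel : HasSum (fun k : ℕ => 1 / ((k : ℝ) + 1) ^ 2) (π ^ 2 / 6) := by
    simpa using (hasSum_nat_add_iff' 1).mpr hasSum_zeta_two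
  have hterm : (fun k : ℕ => 1 / (2 * t * ((k : ℝ) + 1) ^ 2))
      = fun k : ℕ => 1 / (2 * t) * (1 / ((k : ℝ) + 1) ^ 2) := by
    ext k
    field_simp
  rw [hterm, show π ^ 2 / (12 * t) = 1 / (2 * t) * (π ^ 2 / 6) by field_simp; ring]
  exact basel.mul_left _

theorem sum_log_one_add_exp_neg_pow_le {t : ℝ} (ht : 0 < t) {s : Finset ℕ} (hs : 0 ∉ s) :
    ∑ n ∈ s, log (1 + exp (-t) ^ n) ≤ π ^ 2 / (12 * t) := by
  set x := exp (-t)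
  have hx1 : x < 1 := exp_lt_one_iff.mpr (by linarith)
  set u : ℕ → ℕ → ℝ := fun n k => ((x ^ n) ^ (k + 1) - ((x ^ n) ^ 2) ^ (k + 1)) / (k + 1)
  have hlog : ∀ n ∈ s, HasSum (u n) (log (1 + x ^ n)) := fun n hn =>
    hasSum_pow_sub_sq_pow_div_log_one_add (by positivity)
      (pow_lt_one₀ (exp_pos _).le hx1 (ne_of_mem_of_not_mem hn hs))
  have hcoeff : ∀ k : ℕ, ∑ n ∈ s, u n k ≤ 1 / (2 * t * ((k : ℝ) + 1) ^ 2) := by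
    intro k
    set ρ := x ^ (k + 1)
    have hρ : ρ = exp (-(t * (k + 1))) := by
      simp only [ρ, x, ← exp_nat_mul]
      push_cast
      ring_nf
    calc ∑ n ∈ s, u n k = (∑ n ∈ s, (ρ ^ n - (ρ ^ 2) ^ n)) / (k + 1) := by
          rw [sum_div]
          refine sum_congr rfl fun n _ => ?_
          simp only [u, ρ, ← pow_mul]
          ring_nf
      _ ≤ ρ / (1 - ρ ^ 2) / (k + 1) := by
          gcongr
          exact sum_pow_sub_sq_pow_le (by positivity) (pow_lt_one₀ (exp_pos _).le hx1 (by omega)) s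
      _ ≤ 1 / (2 * (t * (k + 1))) / (k + 1) := by
          gcongr ?_ / _
          rw [hρ]
          exact exp_neg_div_one_sub_exp_neg_sq_le (by positivity)
      _ = 1 / (2 * t * ((k : ℝ) + 1) ^ 2) := by
          field_simp
  calc ∑ n ∈ s, log (1 + x ^ n) = ∑' k, ∑ n ∈ s, u n k := by
        rw [Summable.tsum_finsetSum fun n hn => (hlog n hn).summable]
        exact sum_congr rfl fun n hn => (hlog n hn).tsum_eq.symm
    _ ≤ ∑' k : ℕ, 1 / (2 * t * ((k : ℝ) + 1) ^ 2) :=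
        Summable.tsum_le_tsum hcoeff (summable_sum fun n hn => (hlog n hn).summable)
          (hasSum_one_div_mul_add_one_sq ht).summable
    _ = π ^ 2 / (12 * t) := (hasSum_one_div_mul_add_one_sq ht).tsum_eq

theorem prod_one_add_exp_neg_pow_le {t : ℝ} (ht : 0 < t) {s : Finset ℕ} (hs : 0 ∉ s) :
    ∏ n ∈ s, (1 + exp (-t) ^ n) ≤ exp (π ^ 2 / (12 * t)) :=
  calc ∏ n ∈ s, (1 + exp (-t) ^ n) = exp (∑ n ∈ s, log (1 + exp (-t) ^ n)) := by
        rw [exp_sum]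
        exact prod_congr rfl fun n _ => (exp_log (by positivity)).symm
    _ ≤ exp (π ^ 2 / (12 * t)) := exp_le_exp.mpr (sum_log_one_add_exp_neg_pow_le ht hs)

theorem card_distinctPartitions_le {t : ℝ} (ht : 0 < t) {N : ℕ} (hN : N ≠ 0) :
    (#(distinctPartitions N) : ℝ) ≤ t * exp (t * N + π ^ 2 / (12 * t)) := by
  set q : ℕ → ℝ := fun M => #(distinctPartitions M)
  set x := exp (-t)
  have hx1 : x < 1 := exp_lt_one_iff.mpr (by linarith)
  have hpartial : ∀ m, ∑ j ∈ range m, q N * x ^ N * x ^ j ≤ exp (π ^ 2 / (12 * t)) := by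
    intro m
    calc ∑ j ∈ range m, q N * x ^ N * x ^ j
        ≤ ∑ j ∈ range m, q (N + j) * x ^ (N + j) := sum_le_sum fun j _ => by
          rw [mul_assoc, ← pow_add]
          gcongr
          exact Nat.cast_le.mpr (card_distinctPartitions_le_add hN j)
      _ = ∑ M ∈ Ico N (N + m), q M * x ^ M := by rw [sum_Ico_eq_sum_range, add_tsub_cancel_left]
      _ ≤ ∑ M ∈ range (N + m + 1), q M * x ^ M :=
          sum_le_sum_of_subset_of_nonneg (fun M hM => by simp at hM ⊢; omega)
            fun _ _ _ => by positivity
      _ ≤ ∏ n ∈ Icc 1 (N + m), (1 + x ^ n) :=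
          sum_card_distinctPartitions_mul_pow_le (by positivity) _
      _ ≤ exp (π ^ 2 / (12 * t)) := prod_one_add_exp_neg_pow_le ht (by simp)
  have htsum : q N * x ^ N * (1 - x)⁻¹ ≤ exp (π ^ 2 / (12 * t)) := by
    have := tsum_le_of_sum_range_le (fun j => by positivity) hpartial
    rwa [tsum_mul_left, tsum_geometric_of_lt_one (exp_pos _).le hx1] at this
  have hxN : x ^ N * exp (t * N) = 1 := by
    rw [← exp_nat_mul, ← exp_add, show (N : ℝ) * -t + t * N = 0 by ring, exp_zero]
  calc q N = q N * x ^ N * (1 - x)⁻¹ * ((1 - x) * exp (t * N)) := by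
        field_simp [show 1 - x ≠ 0 by linarith]
        rw [mul_assoc, hxN, mul_one]
    _ ≤ exp (π ^ 2 / (12 * t)) * (t * exp (t * N)) := by
        gcongr
        linarith [add_one_le_exp (-t)]
    _ = t * exp (t * N + π ^ 2 / (12 * t)) := by
        rw [exp_add]
        ring

theorem distinct_partition_count_bound (N : ℕ) (hN : 1 ≤ N) :
    ((((Finset.range (N + 1)).powerset.filter
        (fun L => 0 ∉ L ∧ ∑ ℓ ∈ L, ℓ = N)).card : ℝ))
      ≤ Real.pi / (2 * Real.sqrt (3 * N)) * Real.exp (Real.pi * Real.sqrt (N / 3)) := by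
  have hs : √(3 * N) ^ 2 = 3 * N := sq_sqrt (by positivity)
  have hs0 : 0 < √(3 * N) := sqrt_pos.mpr (by positivity)
  have hexponent : π / (2 * √(3 * N)) * N + π ^ 2 / (12 * (π / (2 * √(3 * N))))
      = π * √(N / 3) := by
    rw [show (N : ℝ) / 3 = (√(3 * N) / 3) ^ 2 by rw [div_pow, hs]; ring, sqrt_sq (by positivity)]
    field_simp
    rw [hs]
    ring
  have := card_distinctPartitions_le (div_pos pi_pos (mul_pos two_pos hs0)) (by omega : N ≠ 0)
  rwa [hexponent] at this
end

section
/- For k ∈ ℕ with binary expansion k = k_1 + 2k_2 + ... + 2^{q-1}k_q (k_q = 1), let wal_k(x) = (-1)^{k_1 x_1 + ... + k_q x_q} where x = ∑ x_j 2^{-j} ∈ [0,1). If r and k are such that the number of nonzero binary digits of k exceeds r, then ∫_0^1 x^r wal_k(x) dx = 0. -/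
/-- The `j`-th binary digit (1-indexed) of `x ∈ [0,1)`, using the terminating expansion. -/
noncomputable def binDigit (j : ℕ) (x : ℝ) : ℕ := (⌊2 ^ j * x⌋ % 2).toNat

/-- The base-2 Walsh function `wal_k(x) = (-1)^(k₁x₁ + ⋯ + k_q x_q)`. -/
noncomputable def walsh (k : ℕ) (x : ℝ) : ℝ :=
  (-1 : ℝ) ^ (∑ j ∈ Finset.range k.size, if k.testBit j then binDigit (j + 1) x else 0)

/-!
Write `k = 2n + b` with `b ∈ {0, 1}`. Then `wal_k(x) = (-1)^(b x₁) wal_n(2x)`, so splitting `[0, 1]`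
into its two halves and rescaling each to `[0, 1]` gives
`∫ x^r wal_k = 2^(-r-1) (∫ u^r wal_n + (-1)^b ∫ (u + 1)^r wal_n)`.
If the moments of `wal_n` of order `< r` vanish, the binomial theorem turns `∫ (u + 1)^r wal_n`
into `∫ u^r wal_n`. For `b = 1` the two halves cancel; for `b = 0` both vanish by induction,
since `k` and `n` have the same number of nonzero binary digits.
-/

open Finset intervalIntegral
open MeasureTheory (volume)

theorem Nat.sum_range_size_bit_ite {M : Type*} [AddCommMonoid M] (b : Bool) (n : ℕ) (f : ℕ → M) :
    ∑ j ∈ range (bit b n).size, (if (bit b n).testBit j then f j else 0) =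
      (if b then f 0 else 0) + ∑ j ∈ range n.size, if n.testBit j then f (j + 1) else 0 := by
  by_cases h : bit b n = 0
  · obtain ⟨rfl, rfl⟩ := Nat.bit_eq_zero_iff.mp h
    simp
  · simp only [Nat.size_bit h, sum_range_succ', Nat.testBit_bit_zero, Nat.testBit_bit_succ]
    exact add_comm _ _

def bitCount (k : ℕ) : ℕ := ((range k.size).filter (fun j => k.testBit j)).card

theorem bitCount_bit (b : Bool) (n : ℕ) : bitCount (Nat.bit b n) = bitCount n + b.toNat := by
  simp only [bitCount, card_filter, Nat.sum_range_size_bit_ite]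
  cases b <;> simp [add_comm]

theorem binDigit_succ (j : ℕ) (x : ℝ) : binDigit (j + 1) x = binDigit j (2 * x) := by
  simp only [binDigit, pow_succ, mul_assoc]

theorem binDigit_succ_add_one (j : ℕ) (x : ℝ) :
    binDigit (j + 1) (x + 1) = binDigit (j + 1) x := by
  have h : (2 : ℝ) ^ (j + 1) * (x + 1) = 2 ^ (j + 1) * x + ((2 * 2 ^ j : ℤ) : ℝ) := by
    push_cast; ring
  simp only [binDigit, h, Int.floor_add_intCast, Int.add_mul_emod_self_left]

theorem binDigit_zero_of_mem_Ico {x : ℝ} (hx : x ∈ Set.Ico 0 1) : binDigit 0 x = 0 := by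
  simp [binDigit, Int.floor_eq_zero_iff.mpr hx]

theorem binDigit_zero_add_one_of_mem_Ico {x : ℝ} (hx : x ∈ Set.Ico 0 1) :
    binDigit 0 (x + 1) = 1 := by
  simp [binDigit, Int.floor_eq_zero_iff.mpr hx]

theorem walsh_add_one (k : ℕ) (x : ℝ) : walsh k (x + 1) = walsh k x := by
  simp only [walsh, binDigit_succ_add_one]

theorem walsh_bit_div_two (b : Bool) (n : ℕ) (y : ℝ) :
    walsh (Nat.bit b n) (y / 2) = (-1) ^ (if b then binDigit 0 y else 0) * walsh n y := by
  simp only [walsh, Nat.sum_range_size_bit_ite, pow_add, binDigit_succ,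
    mul_div_cancel₀ y two_ne_zero]

theorem measurable_walsh (k : ℕ) : Measurable (walsh k) := by
  unfold walsh binDigit
  measurability

theorem intervalIntegrable_walsh (k : ℕ) (a b : ℝ) : IntervalIntegrable (walsh k) volume a b := by
  refine (intervalIntegrable_const (c := (1 : ℝ))).mono_fun'
    (measurable_walsh k).aestronglyMeasurable (Filter.Eventually.of_forall fun x => ?_)
  simp [walsh]

theorem integral_zero_one_eq_half_add {g : ℝ → ℝ} (hg : IntervalIntegrable g volume 0 1) :
    ∫ x in (0 : ℝ)..1, g x =
      ((∫ u in (0 : ℝ)..1, g (u / 2)) + ∫ u in (0 : ℝ)..1, g (u / 2 + 1 / 2)) / 2 := by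
  have hmem : (1 / 2 : ℝ) ∈ Set.uIcc 0 1 := by rw [Set.uIcc_of_le zero_le_one]; norm_num
  rw [integral_comp_div g two_ne_zero, integral_comp_div_add g two_ne_zero,
    ← integral_add_adjacent_intervals (hg.mono_set (Set.uIcc_subset_uIcc_left hmem))
      (hg.mono_set (Set.uIcc_subset_uIcc_right hmem))]
  norm_num
  ring

theorem integral_add_pow_mul_eq_of_moments_eq_zero {g : ℝ → ℝ} {a b : ℝ}
    (hg : IntervalIntegrable g volume a b) (c : ℝ) {r : ℕ}
    (hmom : ∀ s < r, ∫ u in a..b, u ^ s * g u = 0) :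
    ∫ u in a..b, (u + c) ^ r * g u = ∫ u in a..b, u ^ r * g u := by
  have hint : ∀ s, IntervalIntegrable (fun u => u ^ s * g u) volume a b := fun s =>
    hg.continuousOn_mul (continuous_pow s).continuousOn
  have hexpand : ∀ u : ℝ, (u + c) ^ r * g u =
      ∑ s ∈ range (r + 1), c ^ (r - s) * r.choose s * (u ^ s * g u) := fun u => by
    rw [add_pow, sum_mul]
    exact sum_congr rfl fun s _ => by ring
  simp_rw [hexpand]
  rw [integral_finsetSum fun s _ => (hint s).const_mul _, sum_range_succ,
    sum_eq_zero fun s hs => by rw [integral_const_mul, hmom s (mem_range.mp hs), mul_zero]]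
  simp

theorem integral_mul_walsh_bit {f : ℝ → ℝ} (hf : Continuous f) (b : Bool) (n : ℕ) :
    ∫ x in (0 : ℝ)..1, f x * walsh (Nat.bit b n) x =
      ((∫ u in (0 : ℝ)..1, f (u / 2) * walsh n u) +
        (-1) ^ b.toNat * ∫ u in (0 : ℝ)..1, f (u / 2 + 1 / 2) * walsh n u) / 2 := by
  rw [integral_zero_one_eq_half_add
      ((intervalIntegrable_walsh _ 0 1).continuousOn_mul hf.continuousOn), ← integral_const_mul]
  congr 2
  · refine integral_congr_Ioo_of_le zero_le_one fun u hu => ?_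
    rw [walsh_bit_div_two, binDigit_zero_of_mem_Ico (Set.Ioo_subset_Ico_self hu)]
    simp
  · refine integral_congr_Ioo_of_le zero_le_one fun u hu => ?_
    rw [← add_div, walsh_bit_div_two, walsh_add_one,
      binDigit_zero_add_one_of_mem_Ico (Set.Ioo_subset_Ico_self hu)]
    cases b <;> simp

theorem integral_pow_mul_walsh_bit (b : Bool) (n r : ℕ)
    (hmom : ∀ s < r, ∫ x in (0 : ℝ)..1, x ^ s * walsh n x = 0) :
    ∫ x in (0 : ℝ)..1, x ^ r * walsh (Nat.bit b n) x =
      (1 + (-1) ^ b.toNat) / 2 ^ (r + 1) * ∫ x in (0 : ℝ)..1, x ^ r * walsh n x := by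
  have hleft : ∫ u in (0 : ℝ)..1, (u / 2) ^ r * walsh n u =
      (∫ u in (0 : ℝ)..1, u ^ r * walsh n u) / 2 ^ r := by
    simp_rw [div_pow, div_mul_eq_mul_div, integral_div]
  have hright : ∫ u in (0 : ℝ)..1, (u / 2 + 1 / 2) ^ r * walsh n u =
      (∫ u in (0 : ℝ)..1, u ^ r * walsh n u) / 2 ^ r := by
    rw [← integral_add_pow_mul_eq_of_moments_eq_zero (intervalIntegrable_walsh n 0 1) 1 hmom]
    simp_rw [← add_div, div_pow, div_mul_eq_mul_div, integral_div]
  rw [integral_mul_walsh_bit (continuous_pow r), hleft, hright]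
  ring

theorem integral_pow_mul_walsh_eq_zero_general (r k : ℕ)
    (hr : r < ((Finset.range k.size).filter (fun j => k.testBit j)).card) :
    ∫ x in (0 : ℝ)..1, x ^ r * walsh k x = 0 := by
  change r < bitCount k at hr
  induction k using Nat.binaryRec generalizing r with
  | zero => simp [bitCount] at hr
  | bit b n ih =>
    rw [bitCount_bit] at hr
    have hmom : ∀ s < r, ∫ x in (0 : ℝ)..1, x ^ s * walsh n x = 0 := fun s hs =>
      ih s (by have := Bool.toNat_le b; omega)
    rw [integral_pow_mul_walsh_bit b n r hmom]
    cases b with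
    | false => rw [ih r hr, mul_zero]
    | true => norm_num

theorem integral_pow_mul_walsh_eq_zero (r k : ℕ) (hk : 1 ≤ k)
    (hr : r < ((Finset.range k.size).filter (fun j => k.testBit j)).card) :
    ∫ x in (0 : ℝ)..1, x ^ r * walsh k x = 0 :=
  integral_pow_mul_walsh_eq_zero_general r k hr
end

section
/- For integers d ≥ 1 and real 0 < x < 1, ∑_{r=d}^∞ (r!/(r−d+1)!)·x^r ≤ d!·(x/(1−x))^d. -/
lemma factorial_ratio_nat_bound (r k : ℕ) :
    (r + (k + 1)).factorial ≤ (k + 1).factorial * ((r + k).choose k) * (r + 1).factorial := by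
  have h := Nat.choose_mul_factorial_mul_factorial (Nat.le_add_left k r)
  simp only [Nat.add_sub_cancel] at h
  have h1 : (r + (k + 1)).factorial = (r + k + 1) * (r + k).factorial := by
    rw [show r + (k + 1) = (r + k) + 1 by ring, Nat.factorial_succ]
  have h2 : (k + 1).factorial * ((r + k).choose k) * (r + 1).factorial
      = ((k + 1) * (r + 1)) * (r + k).factorial := by
    rw [Nat.factorial_succ, Nat.factorial_succ, ← h]; ring
  rw [h1, h2]
  exact Nat.mul_le_mul_right _ (by nlinarith)

theorem tsum_factorial_ratio_pow_le (d : ℕ) (hd : 1 ≤ d) (x : ℝ) (hx0 : 0 < x) (hx1 : x < 1) :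
    ∑' r : ℕ, ((r + d).factorial : ℝ) / ((r + 1).factorial) * x ^ (r + d)
      ≤ (d.factorial : ℝ) * (x / (1 - x)) ^ d := by
  obtain ⟨k, rfl⟩ : ∃ k, d = k + 1 := ⟨d - 1, by omega⟩
  have hxn : ‖x‖ < 1 := by rw [Real.norm_eq_abs, abs_of_pos hx0]; exact hx1
  have hx1' : (0:ℝ) < 1 - x := by linarith
  -- majorant
  set g : ℕ → ℝ := fun r => ((k + 1).factorial : ℝ) * ((r + k).choose k) * x ^ (r + (k + 1))
    with hg_def
  have hgsum : Summable g := by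
    have := (summable_choose_mul_geometric_of_norm_lt_one (R := ℝ) k hxn).mul_left
      (((k + 1).factorial : ℝ) * x ^ (k + 1))
    apply this.congr
    intro r
    simp only [hg_def]
    rw [pow_add]
    ring
  have hle : ∀ r : ℕ, ((r + (k + 1)).factorial : ℝ) / ((r + 1).factorial) * x ^ (r + (k + 1))
      ≤ g r := by
    intro r
    apply mul_le_mul_of_nonneg_right _ (le_of_lt (pow_pos hx0 _))
    rw [div_le_iff₀ (by positivity)]
    exact_mod_cast factorial_ratio_nat_bound r k
  have hfsum : Summable (fun r : ℕ =>
      ((r + (k + 1)).factorial : ℝ) / ((r + 1).factorial) * x ^ (r + (k + 1))) := by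
    apply Summable.of_nonneg_of_le _ hle hgsum
    intro r; positivity
  calc ∑' r : ℕ, ((r + (k + 1)).factorial : ℝ) / ((r + 1).factorial) * x ^ (r + (k + 1))
      ≤ ∑' r, g r := Summable.tsum_le_tsum hle hfsum hgsum
    _ = (((k + 1).factorial : ℝ) * x ^ (k + 1)) * ∑' r : ℕ, ((r + k).choose k : ℝ) * x ^ r := by
        rw [← tsum_mul_left]
        congr 1 with r
        simp only [hg_def]
        rw [pow_add]; ring
    _ = (((k + 1).factorial : ℝ) * x ^ (k + 1)) * (1 / (1 - x) ^ (k + 1)) := by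
        rw [tsum_choose_mul_geometric_of_norm_lt_one k hxn]
    _ = ((k + 1).factorial : ℝ) * (x / (1 - x)) ^ (k + 1) := by
        rw [div_pow]; ring
end
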